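/- Let P₁, P₂ be distributions on a finite alphabet X, and suppose a random sequence X^n is drawn i.i.d. from P₁ and an independent sequence Y^n i.i.d. from P₂. Fix a continuous scoring function f : P(X)² → ℝ≥0 and λ ∈ ℝ≥0. Then the probability that f(T̂_{X^n}, T̂_{Y^n}) ≤ λ, where T̂ denotes the empirical distribution (type), is at most (n+1)^{2|X|} · exp(−n·Ω(P₁,P₂,λ)), where Ω(P₁,P₂,λ) := min over pairs (Q₁,Q₂) of distributions with f(Q₁,Q₂) ≤ λ of D(Q₁‖P₁)+D(Q₂‖P₂). -/

import Mathlib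

open scoped BigOperators

noncomputable section

variable {X : Type*}

/-- `p` is a probability mass function on the finite alphabet `X`. -/
def IsProbVec [Fintype X] (p : X → ℝ) : Prop := (∀ x, 0 ≤ p x) ∧ ∑ x, p x = 1

/-- One term of the KL divergence, with the conventions `0 · log (0/q) = 0` and
`p · log (p/0) = +∞` for `p > 0`. -/
def klTerm (p q : ℝ) : EReal :=
  if p = 0 then 0 else if q = 0 then ⊤ else ((p * Real.log (p / q) : ℝ) : EReal)

/-- Kullback–Leibler divergence `D(P‖Q)` on a finite alphabet, valued in `EReal`. -/
def KL [Fintype X] (P Q : X → ℝ) : EReal := ∑ x, klTerm (P x) (Q x)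

/-- Generalized Jensen–Shannon divergence. -/
def GJS [Fintype X] (P Q : X → ℝ) : EReal :=
  KL P (fun x => (P x + Q x) / 2) + KL Q (fun x => (P x + Q x) / 2)

variable [Fintype X]

/-- The exponent function `η(P₁,P₂)`: infimum of `D(Q₁‖P₁)+D(Q₂‖P₂)+D(Q₃‖P₂)` over triples of
distributions with `f(Q₁,Q₂) ≤ f(Q₃,Q₂)`. -/
def eta (f : (X → ℝ) → (X → ℝ) → ℝ) (P₁ P₂ : X → ℝ) : EReal :=
  ⨅ t : {t : (X → ℝ) × (X → ℝ) × (X → ℝ) //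
      IsProbVec t.1 ∧ IsProbVec t.2.1 ∧ IsProbVec t.2.2 ∧ f t.1 t.2.1 ≤ f t.2.2 t.2.1},
    KL t.1.1 P₁ + KL t.1.2.1 P₂ + KL t.1.2.2 P₂

/-- The exponent function `Ω(P₁,P₂,λ)`: infimum of `D(Q₁‖P₁)+D(Q₂‖P₂)` over pairs of
distributions with `f(Q₁,Q₂) ≤ λ`. -/
def Omega (f : (X → ℝ) → (X → ℝ) → ℝ) (P₁ P₂ : X → ℝ) (lam : ℝ) : EReal :=
  ⨅ t : {t : (X → ℝ) × (X → ℝ) // IsProbVec t.1 ∧ IsProbVec t.2 ∧ f t.1 t.2 ≤ lam},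
    KL t.1.1 P₁ + KL t.1.2 P₂

/-- The exponent function `Υ(P,λ)`: infimum of `D(Q₁‖P)+D(Q₂‖P)` over pairs of distributions
with `f(Q₁,Q₂) ≥ λ` (the infimum over the empty set being `+∞`). -/
def Upsilon (f : (X → ℝ) → (X → ℝ) → ℝ) (P : X → ℝ) (lam : ℝ) : EReal :=
  ⨅ t : {t : (X → ℝ) × (X → ℝ) // IsProbVec t.1 ∧ IsProbVec t.2 ∧ lam ≤ f t.1 t.2},
    KL t.1.1 P + KL t.1.2 P

/-- The exponent function `γ(P₁,P₂)`: infimum of `D(Q₁‖P₁)+D(Q₂‖P₁)+D(Q₃‖P₂)` over triples of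
distributions with `f(Q₁,Q₃) ≤ f(Q₁,Q₂)`. -/
def gammaExp (f : (X → ℝ) → (X → ℝ) → ℝ) (P₁ P₂ : X → ℝ) : EReal :=
  ⨅ t : {t : (X → ℝ) × (X → ℝ) × (X → ℝ) //
      IsProbVec t.1 ∧ IsProbVec t.2.1 ∧ IsProbVec t.2.2 ∧ f t.1 t.2.2 ≤ f t.1 t.2.1},
    KL t.1.1 P₁ + KL t.1.2.1 P₁ + KL t.1.2.2 P₂

/-- `min_Q D(Q‖P₁)+D(Q‖P₂)`, i.e. `Ω(P₁,P₂,0)` for a scoring function vanishing exactly on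
the diagonal. -/
def OmegaZero (P₁ P₂ : X → ℝ) : EReal :=
  ⨅ Q : {q : X → ℝ // IsProbVec q}, KL Q.1 P₁ + KL Q.1 P₂

/-- Empirical distribution (type) of a length-`n` sequence. -/
def empDist [DecidableEq X] (n : ℕ) (x : Fin n → X) : X → ℝ :=
  fun a => ((Finset.univ.filter (fun i => x i = a)).card : ℝ) / n

/-! Group the pairs of sequences by their pair of types `(Q₁, Q₂)`. Inside the type class of `Q`
the i.i.d. probability is `exp (-n D(Q‖P))` times the `Q`-probability (the letter counts are
`n Q a`), so the class has `P`-probability at most `exp (-n D(Q‖P))`, or zero when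
`D(Q‖P) = ∞`. A pair of classes contributes only when `f Q₁ Q₂ ≤ λ`, and then at most
`exp (-n (D(Q₁‖P₁) + D(Q₂‖P₂))) ≤ exp (-n Ω)`. There are at most `(n+1)^|X|` types. -/

open Finset

lemma EReal.exp_neg_mul_mul_exp_neg_mul_le {c a b w : EReal} (hc : 0 ≤ c) (hc' : c ≠ ⊤)
    (ha : a ≠ ⊥) (hb : b ≠ ⊥) (h : w ≤ a + b) :
    EReal.exp (-c * a) * EReal.exp (-c * b) ≤ EReal.exp (-c * w) := by
  have hc_ne_bot : c ≠ ⊥ := (EReal.bot_lt_zero.trans_le hc).ne'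
  have hca : c * a ≠ ⊥ := (EReal.mul_ne_bot c a).2 ⟨.inl hc_ne_bot, .inr ha, .inl hc', .inl hc⟩
  have hcb : c * b ≠ ⊥ := (EReal.mul_ne_bot c b).2 ⟨.inl hc_ne_bot, .inr hb, .inl hc', .inl hc⟩
  rw [← EReal.exp_add, EReal.neg_mul, EReal.neg_mul, EReal.neg_mul, ← sub_eq_add_neg,
    ← EReal.neg_add (.inl hca) (.inr hcb), ← EReal.left_distrib_of_nonneg_of_ne_top hc hc']
  exact EReal.exp_monotone (EReal.neg_le_neg_iff.2 (mul_le_mul_of_nonneg_left h hc))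

lemma EReal.coe_finsetSum {ι : Type*} (s : Finset ι) (g : ι → ℝ) :
    ((∑ i ∈ s, g i : ℝ) : EReal) = ∑ i ∈ s, (g i : EReal) :=
  map_sum (⟨⟨Real.toEReal, EReal.coe_zero⟩, EReal.coe_add⟩ : ℝ →+ EReal) _ _

lemma ENNReal.ofReal_sum_le {ι : Type*} (s : Finset ι) (g : ι → ℝ) :
    ENNReal.ofReal (∑ i ∈ s, g i) ≤ ∑ i ∈ s, ENNReal.ofReal (g i) :=
  le_sum_of_subadditive _ ENNReal.ofReal_zero.le (fun _ _ => ENNReal.ofReal_add_le) _ _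

lemma klTerm_ne_bot (p q : ℝ) : klTerm p q ≠ ⊥ := by
  unfold klTerm
  split_ifs
  exacts [EReal.zero_ne_bot, top_ne_bot, EReal.coe_ne_bot _]

lemma KL_ne_bot (Q P : X → ℝ) : KL Q P ≠ ⊥ :=
  sum_induction _ (· ≠ ⊥) (fun _ _ ha hb => EReal.add_ne_bot_iff.2 ⟨ha, hb⟩) EReal.zero_ne_bot
    fun a _ => klTerm_ne_bot (Q a) (P a)

lemma KL_eq_coe_sum {Q P : X → ℝ} (h : ∀ a, P a = 0 → Q a = 0) :
    KL Q P = ((∑ a, Q a * Real.log (Q a / P a) : ℝ) : EReal) := by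
  rw [KL, EReal.coe_finsetSum]
  refine sum_congr rfl fun a _ => ?_
  by_cases hQ : Q a = 0
  · simp [klTerm, hQ]
  · simp [klTerm, hQ, mt (h a) hQ]

lemma Omega_le_KL_add_KL {f : (X → ℝ) → (X → ℝ) → ℝ} {P₁ P₂ Q₁ Q₂ : X → ℝ} {lam : ℝ}
    (hQ₁ : IsProbVec Q₁) (hQ₂ : IsProbVec Q₂) (hf : f Q₁ Q₂ ≤ lam) :
    Omega f P₁ P₂ lam ≤ KL Q₁ P₁ + KL Q₂ P₂ :=
  iInf_le_of_le ⟨(Q₁, Q₂), hQ₁, hQ₂, hf⟩ le_rfl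

lemma sum_prod_le_one {n : ℕ} {Q : X → ℝ} (hQ : IsProbVec Q) (s : Finset (Fin n → X)) :
    ∑ x ∈ s, ∏ i, Q (x i) ≤ 1 :=
  calc ∑ x ∈ s, ∏ i, Q (x i) ≤ ∑ x : Fin n → X, ∏ i, Q (x i) :=
        sum_le_univ_sum_of_nonneg fun x => prod_nonneg fun i _ => hQ.1 (x i)
    _ = 1 := by rw [← Fintype.sum_pow, hQ.2, one_pow]

section MethodOfTypes

variable [DecidableEq X] {n : ℕ}

def typeClass (n : ℕ) (Q : X → ℝ) : Finset (Fin n → X) := univ.filter fun x => empDist n x = Q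

def typeSet (n : ℕ) : Finset (X → ℝ) := univ.image (empDist n)

lemma mem_typeClass {Q : X → ℝ} {x : Fin n → X} : x ∈ typeClass n Q ↔ empDist n x = Q := by
  simp [typeClass]

lemma natCast_mul_empDist {α : Type*} [DecidableEq α] (hn : n ≠ 0) (x : Fin n → α) (a : α) :
    n * empDist n x a = (univ.filter fun i => x i = a).card := by
  rw [empDist]
  field_simp

lemma empDist_isProbVec (hn : n ≠ 0) (x : Fin n → X) : IsProbVec (empDist n x) := by
  refine ⟨fun a => by unfold empDist; positivity, ?_⟩
  simp_rw [empDist, ← sum_div, ← Nat.cast_sum]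
  rw [← card_eq_sum_card_fiberwise fun i _ => mem_univ (x i), card_univ, Fintype.card_fin,
    div_self (Nat.cast_ne_zero.2 hn)]

lemma isProbVec_of_mem_typeSet (hn : n ≠ 0) {Q : X → ℝ} (hQ : Q ∈ typeSet n) : IsProbVec Q := by
  obtain ⟨x, -, rfl⟩ := mem_image.1 hQ
  exact empDist_isProbVec hn x

lemma card_typeSet_le (n : ℕ) : (typeSet (X := X) n).card ≤ (n + 1) ^ Fintype.card X := by
  have hsub : typeSet (X := X) n ⊆
      univ.image fun c : X → Fin (n + 1) => fun a => ((c a : ℕ) : ℝ) / n := by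
    intro Q hQ
    obtain ⟨x, -, rfl⟩ := mem_image.1 hQ
    refine mem_image.2 ⟨fun a => ⟨(univ.filter fun i => x i = a).card, ?_⟩, mem_univ _, rfl⟩
    exact Nat.lt_succ_of_le ((card_filter_le _ _).trans_eq (card_fin n))
  calc (typeSet n).card ≤ _ := card_le_card hsub
    _ ≤ (univ : Finset (X → Fin (n + 1))).card := card_image_le
    _ = (n + 1) ^ Fintype.card X := by simp

lemma prod_eq_prod_pow_card_filter {M : Type*} [CommMonoid M] (g : X → M) (x : Fin n → X) :
    ∏ i, g (x i) = ∏ a, g a ^ (univ.filter fun i => x i = a).card := by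
  simp_rw [← prod_const, prod_fiberwise' univ x g]

lemma prod_eq_exp_mul_prod_of_mem_typeClass {P Q : X → ℝ} (hP : ∀ a, 0 ≤ P a)
    (hPQ : ∀ a, P a = 0 → Q a = 0) {x : Fin n → X} (hx : x ∈ typeClass n Q) :
    ∏ i, P (x i) = Real.exp (-(n * ∑ a, Q a * Real.log (Q a / P a))) * ∏ i, Q (x i) := by
  rw [mem_typeClass] at hx
  subst hx
  rw [prod_eq_prod_pow_card_filter P, prod_eq_prod_pow_card_filter (empDist n x), mul_sum,
    ← sum_neg_distrib, Real.exp_sum, ← prod_mul_distrib]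
  refine prod_congr rfl fun a _ => ?_
  set c := (univ.filter fun i => x i = a).card
  rcases Nat.eq_zero_or_pos c with hc | hc
  · simp [empDist, c, hc]
  have hn : n ≠ 0 := by rintro rfl; exact absurd hc (by simp [c])
  have hQa : 0 < empDist n x a := by unfold empDist; positivity
  have hPa : 0 < P a := (hP a).lt_of_ne' fun h => hQa.ne' (hPQ a h)
  rw [← mul_assoc, natCast_mul_empDist hn, ← inv_div, Real.log_inv, mul_neg, neg_neg,
    Real.exp_nat_mul, Real.exp_log (div_pos hPa hQa), div_pow, div_mul_cancel₀ _ (by positivity)]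

theorem ofReal_sum_typeClass_le (hn : n ≠ 0) {P : X → ℝ} (hP : ∀ a, 0 ≤ P a) (Q : X → ℝ) :
    ENNReal.ofReal (∑ x ∈ typeClass n Q, ∏ i, P (x i)) ≤ EReal.exp (-(n : EReal) * KL Q P) := by
  rcases (typeClass n Q).eq_empty_or_nonempty with hempty | ⟨x₀, hx₀⟩
  · simp [hempty]
  have hQ : IsProbVec Q := mem_typeClass.1 hx₀ ▸ empDist_isProbVec hn x₀
  by_cases hPQ : ∀ a, P a = 0 → Q a = 0
  · rw [sum_congr rfl fun x hx => prod_eq_exp_mul_prod_of_mem_typeClass hP hPQ hx, ← mul_sum,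
      KL_eq_coe_sum hPQ, ← EReal.coe_coe_eq_natCast, ← EReal.coe_neg, ← EReal.coe_mul,
      EReal.exp_coe, neg_mul]
    exact ENNReal.ofReal_le_ofReal
      (mul_le_of_le_one_right (Real.exp_pos _).le (sum_prod_le_one hQ _))
  push Not at hPQ
  obtain ⟨a, hPa, hQa⟩ := hPQ
  have hvanish : ∀ x ∈ typeClass n Q, ∏ i, P (x i) = 0 := by
    intro x hx
    obtain ⟨i, hi⟩ : ∃ i, x i = a := by
      by_contra! h
      exact hQa (by simp [← mem_typeClass.1 hx, empDist, h])
    exact prod_eq_zero (mem_univ i) (by rw [hi, hPa])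
  simp [sum_eq_zero hvanish]

lemma sum_eq_sum_typeSet_sum_typeClass {M : Type*} [AddCommMonoid M] (F : (Fin n → X) → M) :
    ∑ x, F x = ∑ Q ∈ typeSet n, ∑ x ∈ typeClass n Q, F x :=
  (sum_fiberwise_of_maps_to (fun x _ => mem_image_of_mem _ (mem_univ x)) F).symm

lemma sum_pair_eq_sum_typeSet_sum_typeClass {M : Type*} [AddCommMonoid M]
    (F : (Fin n → X) × (Fin n → X) → M) :
    ∑ p, F p = ∑ Q₁ ∈ typeSet n, ∑ Q₂ ∈ typeSet n,
      ∑ x ∈ typeClass n Q₁, ∑ y ∈ typeClass n Q₂, F (x, y) := by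
  simp_rw [Fintype.sum_prod_type, sum_eq_sum_typeSet_sum_typeClass (fun x => ∑ y, F (x, y)),
    sum_eq_sum_typeSet_sum_typeClass (fun y => F (_, y))]
  exact sum_congr rfl fun Q₁ _ => sum_comm

theorem ofReal_sum_typeClass_score_le (hn : n ≠ 0) (f : (X → ℝ) → (X → ℝ) → ℝ)
    {P₁ P₂ : X → ℝ} (hP₁ : ∀ a, 0 ≤ P₁ a) (hP₂ : ∀ a, 0 ≤ P₂ a) (lam : ℝ) {Q₁ Q₂ : X → ℝ}
    (hQ₁ : Q₁ ∈ typeSet n) (hQ₂ : Q₂ ∈ typeSet n) :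
    ENNReal.ofReal (∑ x ∈ typeClass n Q₁, ∑ y ∈ typeClass n Q₂,
        if f (empDist n x) (empDist n y) ≤ lam then (∏ i, P₁ (x i)) * ∏ i, P₂ (y i) else 0) ≤
      EReal.exp (-(n : EReal) * Omega f P₁ P₂ lam) := by
  have hscore : ∀ x ∈ typeClass n Q₁, ∀ y ∈ typeClass n Q₂,
      f (empDist n x) (empDist n y) = f Q₁ Q₂ := fun x hx y hy => by
    rw [mem_typeClass.1 hx, mem_typeClass.1 hy]
  by_cases hf : f Q₁ Q₂ ≤ lam
  · have hOmega := Omega_le_KL_add_KL (P₁ := P₁) (P₂ := P₂)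
      (isProbVec_of_mem_typeSet hn hQ₁) (isProbVec_of_mem_typeSet hn hQ₂) hf
    rw [sum_congr rfl fun x hx => sum_congr rfl fun y hy => by rw [hscore x hx y hy, if_pos hf],
      ← sum_mul_sum, ENNReal.ofReal_mul (sum_nonneg fun x _ => prod_nonneg fun i _ => hP₁ _)]
    calc _ ≤ EReal.exp (-(n : EReal) * KL Q₁ P₁) * EReal.exp (-(n : EReal) * KL Q₂ P₂) :=
          mul_le_mul' (ofReal_sum_typeClass_le hn hP₁ Q₁) (ofReal_sum_typeClass_le hn hP₂ Q₂)
      _ ≤ _ := EReal.exp_neg_mul_mul_exp_neg_mul_le (by positivity) (EReal.natCast_ne_top n)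
          (KL_ne_bot _ _) (KL_ne_bot _ _) hOmega
  · rw [sum_eq_zero fun x hx => sum_eq_zero fun y hy => by rw [hscore x hx y hy, if_neg hf],
      ENNReal.ofReal_zero]
    exact bot_le

end MethodOfTypes

open Classical in
theorem prob_score_le_bound_general [DecidableEq X]
    (f : (X → ℝ) → (X → ℝ) → ℝ)
    (P₁ P₂ : X → ℝ) (hP₁ : IsProbVec P₁) (hP₂ : IsProbVec P₂)
    (n : ℕ) (hn : 0 < n) (lam : ℝ) :
    ENNReal.ofReal
        (∑ p : (Fin n → X) × (Fin n → X),
          if f (empDist n p.1) (empDist n p.2) ≤ lam then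
            (∏ i, P₁ (p.1 i)) * (∏ i, P₂ (p.2 i)) else 0) ≤
      ((n + 1 : ENNReal)) ^ (2 * Fintype.card X) *
        EReal.exp (-(n : EReal) * Omega f P₁ P₂ lam) := by
  set bound := EReal.exp (-(n : EReal) * Omega f P₁ P₂ lam)
  calc _ ≤ ∑ Q₁ ∈ typeSet n, ∑ Q₂ ∈ typeSet n, bound := by
        rw [sum_pair_eq_sum_typeSet_sum_typeClass]
        refine (ENNReal.ofReal_sum_le _ _).trans (sum_le_sum fun Q₁ hQ₁ => ?_)
        refine (ENNReal.ofReal_sum_le _ _).trans (sum_le_sum fun Q₂ hQ₂ => ?_)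
        exact ofReal_sum_typeClass_score_le hn.ne' f hP₁.1 hP₂.1 lam hQ₁ hQ₂
    _ = ((typeSet (X := X) n).card : ENNReal) ^ 2 * bound := by
        simp only [sum_const, nsmul_eq_mul, ← mul_assoc, sq]
    _ ≤ ((n + 1 : ENNReal)) ^ (2 * Fintype.card X) * bound := by
        rw [mul_comm 2, pow_mul]
        gcongr
        exact_mod_cast card_typeSet_le n

open Classical in
/-- Method-of-types bound: the probability that the pair of empirical distributions of two
independent i.i.d. sequences (from `P₁` and `P₂`) has score at most `λ` is at most
`(n+1)^{2|X|} · exp(−n·Ω(P₁,P₂,λ))`. -/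
theorem prob_score_le_bound [Nonempty X] [DecidableEq X]
    (f : (X → ℝ) → (X → ℝ) → ℝ)
    (hf0 : ∀ P Q, IsProbVec P → IsProbVec Q → 0 ≤ f P Q)
    (hfc : ContinuousOn (fun pq : (X → ℝ) × (X → ℝ) => f pq.1 pq.2)
      {pq | IsProbVec pq.1 ∧ IsProbVec pq.2})
    (P₁ P₂ : X → ℝ) (hP₁ : IsProbVec P₁) (hP₂ : IsProbVec P₂)
    (n : ℕ) (hn : 0 < n) (lam : ℝ) (hlam : 0 ≤ lam) :
    ENNReal.ofReal
        (∑ p : (Fin n → X) × (Fin n → X),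
          if f (empDist n p.1) (empDist n p.2) ≤ lam then
            (∏ i, P₁ (p.1 i)) * (∏ i, P₂ (p.2 i)) else 0) ≤
      ((n + 1 : ENNReal)) ^ (2 * Fintype.card X) *
        EReal.exp (-(n : EReal) * Omega f P₁ P₂ lam) :=
  prob_score_le_bound_general f P₁ P₂ hP₁ hP₂ n hn lam
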